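/- Let T be a finite tree and let u and v be end-cutvertices of T such that T − u is isomorphic to T − v. Then u and v are similar in T, i.e. there is an automorphism of T mapping u to v. -/

import Mathlib

open SimpleGraph

namespace ErnPaper

/-- The weight of a vertex `v` in a graph `G`: the number of vertices in a largest
connected component of `G - v`. -/
noncomputable def wt {V : Type} [Fintype V] (G : SimpleGraph V) (v : V) : ℕ :=
  sSup {n | ∃ c : (G.induce ({v}ᶜ : Set V)).ConnectedComponent, n = Nat.card c.supp}

/-- The centroid of a graph: the set of vertices of minimum weight. -/
def centroid {V : Type} [Fintype V] (G : SimpleGraph V) : Set V :=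
  {v | ∀ u, wt G v ≤ wt G u}

/-- The edge-reconstruction number of a finite graph `G`: the least `k` for which there exist
`k` distinct edges `e₁, …, e_k` of `G` such that any finite graph `H` having `k` distinct
edges `f₁, …, f_k` with `H - fᵢ ≅ G - eᵢ` for all `i` must be isomorphic to `G`. -/
noncomputable def ern {V : Type} [Fintype V] (G : SimpleGraph V) : ℕ :=
  sInf {k | ∃ s : Finset (Sym2 V), s.card = k ∧ (↑s : Set (Sym2 V)) ⊆ G.edgeSet ∧
    ∀ (W : Type) (_ : Fintype W) (H : SimpleGraph W) (t : Finset (Sym2 W)),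
      (↑t : Set (Sym2 W)) ⊆ H.edgeSet →
      (∃ φ : {e // e ∈ s} ≃ {f // f ∈ t},
        ∀ e : {e // e ∈ s},
          Nonempty (H.deleteEdges {(φ e).1} ≃g G.deleteEdges {e.1})) →
      Nonempty (H ≃g G)}

/-- The spider tree `S_{p,q,r}`: three paths with `p`, `q`, `r` edges respectively,
emanating from a common central vertex. -/
def spider (p q r : ℕ) : SimpleGraph (Unit ⊕ (Fin p ⊕ Fin q ⊕ Fin r)) :=
  SimpleGraph.fromRel fun x y =>
    match x, y with
    | Sum.inl _, Sum.inr (Sum.inl j) => (j : ℕ) = 0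
    | Sum.inl _, Sum.inr (Sum.inr (Sum.inl j)) => (j : ℕ) = 0
    | Sum.inl _, Sum.inr (Sum.inr (Sum.inr j)) => (j : ℕ) = 0
    | Sum.inr (Sum.inl i), Sum.inr (Sum.inl j) => (j : ℕ) = (i : ℕ) + 1
    | Sum.inr (Sum.inr (Sum.inl i)), Sum.inr (Sum.inr (Sum.inl j)) => (j : ℕ) = (i : ℕ) + 1
    | Sum.inr (Sum.inr (Sum.inr i)), Sum.inr (Sum.inr (Sum.inr j)) => (j : ℕ) = (i : ℕ) + 1
    | _, _ => False

/-- A pseudopath: a tree isomorphic to a path `P_k`, to `S_{1,1,2}`, or to `S_{1,2,3}`. -/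
def IsPseudopath {V : Type} (T : SimpleGraph V) : Prop :=
  (∃ k, Nonempty (T ≃g pathGraph k)) ∨
    Nonempty (T ≃g spider 1 1 2) ∨ Nonempty (T ≃g spider 1 2 3)

/-- `T - xv + yv`: delete the end-edge `xv` and add the new edge `yv`. -/
def replaceEdge {V : Type} (T : SimpleGraph V) (x v y : V) : SimpleGraph V :=
  SimpleGraph.fromEdgeSet ((T.edgeSet \ {s(x, v)}) ∪ {s(y, v)})

/-- The disjoint union of two simple graphs. -/
def disjUnion {α β : Type} (G : SimpleGraph α) (H : SimpleGraph β) :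
    SimpleGraph (α ⊕ β) :=
  SimpleGraph.fromRel fun x y =>
    match x, y with
    | Sum.inl a, Sum.inl b => G.Adj a b
    | Sum.inr a, Sum.inr b => H.Adj a b
    | _, _ => False

/-- The caterpillar `C(2,0,…,0,2)` with spine on `m` vertices: spine path `v₀ … v_{m-1}`,
with two extra endvertices adjacent to `v₀` and two to `v_{m-1}`. -/
def doubleBroom (m : ℕ) : SimpleGraph (Fin m ⊕ Fin 4) :=
  SimpleGraph.fromRel fun x y =>
    match x, y with
    | Sum.inl i, Sum.inl j => (j : ℕ) = (i : ℕ) + 1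
    | Sum.inl i, Sum.inr l =>
        ((i : ℕ) = 0 ∧ (l : ℕ) < 2) ∨ ((i : ℕ) = m - 1 ∧ 2 ≤ (l : ℕ))
    | _, _ => False


/-- An end-cutvertex of a tree: a vertex of degree at least 2 that is adjacent to exactly
one vertex of degree greater than 1. -/
def IsEndCutvertex {V : Type} (T : SimpleGraph V) (u : V) : Prop :=
  2 ≤ (T.neighborSet u).ncard ∧
    {w | w ∈ T.neighborSet u ∧ 2 ≤ (T.neighborSet w).ncard}.ncard = 1


/-!
Write `A` and `B` for the leaves hanging at `u` and at `v`. In `T - u` the vertices of `A` are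
isolated and the rest is the tree `T - (u + A)`, so `T - u ≅ T - v` forces `|A| = |B|` and gives
`χ : T - (u + A) ≅ T - (v + B)`. Let `S` be `T` with both pendant stars `u + A` and `v + B`
removed. An automorphism of `T[S]` exchanging the neighbours of `u` and of `v` in `S` extends,
by swapping the two stars, to an automorphism of `T` taking `u` to `v`; if `u` and `v` have the
same neighbours in `S` the identity will do. Otherwise `u` and `v` are at distance at least three.
Then `χ v` and `u` are end-cutvertices of the smaller tree `T - (v + B)` whose deletions are both
isomorphic to `T[S]` plus `|A|` isolated vertices, so by induction we may assume `χ v = u`. Now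
`χ` restricts to an automorphism of `T[S]` taking the neighbour `v'` of `v` to the neighbour `u'`
of `u`, and it remains to replace it by one that exchanges `u'` and `v'`.

This last step is the classical fact that similar vertices of a tree can be swapped. It is proved
by induction after deleting all leaves: an automorphism of the remaining tree lifts as soon as it
preserves, at every vertex, the number of leaves of each weight hanging there, which is why the
statement is made for automorphisms preserving a weight function.
-/

end ErnPaper

lemma apply_apply_eq_self_of_card_le_two {α : Type*} [Finite α] (hα : Nat.card α ≤ 2)
    {f : α → α} (hf : f.Injective) {a : α} (ha : f a ≠ a) : f (f a) = a := by
  by_contra h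
  have h3 : ({a, f a, f (f a)} : Set α).ncard = 3 :=
    Set.ncard_eq_three.2 ⟨_, _, _, Ne.symm ha, Ne.symm h, fun h' => ha (hf h').symm, rfl⟩
  have := Set.ncard_le_card ({a, f a, f (f a)} : Set α)
  omega

lemma exists_perm_swap_of_disjoint {α : Type*} {A B : Set α} (hAB : Disjoint A B)
    (e : A ≃ B) : ∃ π : Equiv.Perm α, (∀ x ∈ A, π x ∈ B) ∧ (∀ x ∈ B, π x ∈ A) ∧
      ∀ x ∉ A ∪ B, π x = x := by
  classical
  set f : Equiv.Perm ↥(A ∪ B) := (Equiv.Set.union hAB).trans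
    ((Equiv.sumCongr e e.symm).trans ((Equiv.sumComm B A).trans (Equiv.Set.union hAB).symm))
  refine ⟨Equiv.Perm.ofSubtype f, fun x hx => ?_, fun x hx => ?_,
    fun x hx => Equiv.Perm.ofSubtype_apply_of_not_mem f hx⟩
  · rw [Equiv.Perm.ofSubtype_apply_of_mem f (Or.inl hx)]
    simp [f, Equiv.Set.union_apply_left hAB (a := ⟨x, Or.inl hx⟩) hx]
  · rw [Equiv.Perm.ofSubtype_apply_of_mem f (Or.inr hx)]
    simp [f, Equiv.Set.union_apply_right hAB (a := ⟨x, Or.inr hx⟩) hx]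

lemma exists_perm_piecewise {α : Type*} {S : Set α} (τ : Equiv.Perm S) (σ : Equiv.Perm α)
    (hσ : ∀ q : S, σ q = q) : ∃ π : Equiv.Perm α, (∀ q : S, π q = τ q) ∧ ∀ x ∉ S, π x = σ x := by
  classical
  refine ⟨Equiv.Perm.ofSubtype τ * σ, fun q => by simp [hσ q], fun x hx => ?_⟩
  have hσx : σ x ∉ S := fun h => hx (σ.injective (hσ ⟨_, h⟩) ▸ h)
  simp [Equiv.Perm.ofSubtype_apply_of_not_mem τ hσx]

namespace SimpleGraph

variable {V W : Type*} {G : SimpleGraph V} {H : SimpleGraph W}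

section Isomorphisms

def Iso.induceRestrict {s s' : Set V} {t t' : Set W} (f : G.induce s ≃g H.induce t)
    (hs : s' ⊆ s) (ht : t' ⊆ t) (h : ∀ x : s, (x : V) ∈ s' ↔ (f x : W) ∈ t') :
    G.induce s' ≃g H.induce t' where
  toFun x := ⟨f ⟨x, hs x.2⟩, (h _).1 x.2⟩
  invFun y := ⟨f.symm ⟨y, ht y.2⟩, (h _).2 (by simp)⟩
  left_inv x := by simp
  right_inv y := by simp
  map_rel_iff' := f.map_adj_iff

noncomputable def induceInduceIso (G : SimpleGraph V) {s r : Set V} {t : Set s}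
    (h : Subtype.val '' t = r) : (G.induce s).induce t ≃g G.induce r where
  toEquiv := (Equiv.Set.image Subtype.val t Subtype.val_injective).trans (Equiv.setCongr h)
  map_rel_iff' := Iff.rfl

def induceIsoOfEquiv (π : V ≃ W) {s : Set V} {t : Set W} (h : ∀ x, π x ∈ t ↔ x ∈ s)
    (hadj : ∀ x ∈ s, ∀ y ∈ s, H.Adj (π x) (π y) ↔ G.Adj x y) : G.induce s ≃g H.induce t where
  toEquiv := π.subtypeEquiv fun x => (h x).symm
  map_rel_iff' {x y} := hadj x x.2 y y.2

lemma image_val_induce_neighborSet {s : Set V} (x : s) (hx : G.neighborSet x ⊆ s) :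
    Subtype.val '' (G.induce s).neighborSet x = G.neighborSet x := by
  rw [neighborSet_induce, Set.image_preimage_eq_inter_range, Subtype.range_coe,
    Set.inter_eq_left.2 hx]

lemma Iso.ncard_neighborSet (f : G ≃g H) (x : V) :
    (H.neighborSet (f x)).ncard = (G.neighborSet x).ncard := by
  rw [← f.image_neighborSet, Set.ncard_image_of_injective _ f.injective]

lemma Iso.neighborSet_apply_eq_singleton (f : G ≃g H) {x y : V}
    (h : G.neighborSet x = {y}) : H.neighborSet (f x) = {f y} := by
  rw [← f.image_neighborSet, h, Set.image_singleton]

def Iso.swapOfNeighborSetEq [DecidableEq V] {x y : V} (h : G.neighborSet x = G.neighborSet y) :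
    G ≃g G where
  toEquiv := Equiv.swap x y
  map_rel_iff' {a b} := by
    have hxy : ∀ c, G.Adj x c ↔ G.Adj y c := fun c => by
      rw [← mem_neighborSet, h, mem_neighborSet]
    simp only [Equiv.swap_apply_def]
    split_ifs <;> subst_vars <;> grind [adj_comm, G.loopless]

lemma neighborSet_swap_apply [DecidableEq V] {x y : V} (h : G.neighborSet x = G.neighborSet y)
    (z : V) : G.neighborSet (Equiv.swap x y z) = G.neighborSet z := by
  rw [Equiv.swap_apply_def]
  split_ifs <;> simp_all

end Isomorphisms

section Leaves

def leaves (G : SimpleGraph V) : Set V := {x | (G.neighborSet x).Subsingleton}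

lemma mem_leaves {x : V} : x ∈ G.leaves ↔ (G.neighborSet x).Subsingleton := Iff.rfl

lemma Iso.apply_mem_leaves_iff (f : G ≃g H) {x : V} : f x ∈ H.leaves ↔ x ∈ G.leaves := by
  rw [mem_leaves, mem_leaves, ← f.image_neighborSet, f.injective.subsingleton_image_iff]

lemma adj_iff_eq_of_neighborSet_eq_singleton {x y z : V} (h : G.neighborSet x = {z}) :
    G.Adj x y ↔ y = z := by
  rw [← mem_neighborSet, h, Set.mem_singleton_iff]

lemma adj_apply_iff_of_neighborSet_eq_singleton {π : V → V} (hπ : π.Injective) {x z : V}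
    (hx : G.neighborSet x = {z}) (hπx : G.neighborSet (π x) = {π z}) (y : V) :
    G.Adj (π x) (π y) ↔ G.Adj x y := by
  rw [adj_iff_eq_of_neighborSet_eq_singleton hx, adj_iff_eq_of_neighborSet_eq_singleton hπx,
    hπ.eq_iff]

lemma adj_apply_iff_of_pendant {π : V → V} (hπ : π.Injective) {L : Set V}
    (hL : ∀ x ∈ L, ∃ z, G.neighborSet x = {z} ∧ G.neighborSet (π x) = {π z})
    (hcore : ∀ x ∉ L, ∀ y ∉ L, G.Adj (π x) (π y) ↔ G.Adj x y) (x y : V) :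
    G.Adj (π x) (π y) ↔ G.Adj x y := by
  have pendant : ∀ x ∈ L, ∀ y, G.Adj (π x) (π y) ↔ G.Adj x y := fun x hx y =>
    let ⟨_, hz, hπz⟩ := hL x hx
    adj_apply_iff_of_neighborSet_eq_singleton hπ hz hπz y
  by_cases hx : x ∈ L
  · exact pendant x hx y
  by_cases hy : y ∈ L
  · rw [G.adj_comm, G.adj_comm x]
    exact pendant y hy x
  exact hcore x hx y hy

variable {Q : Type*} {L : Set V} {p : V → V}

noncomputable def fiberCard (L : Set V) (p : V → Q) (w : V → W) (q : Q) (d : W) : ℕ :=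
  {x | x ∈ L ∧ p x = q ∧ w x = d}.ncard

lemma exists_perm_of_fiberCard_eq (L : Set V) [Finite L] (p : V → Q) (w : V → W)
    (σ : Equiv.Perm Q) (h : ∀ c, fiberCard L p w (σ c) = fiberCard L p w c) :
    ∃ e : Equiv.Perm L, ∀ x, p (e x) = σ (p x) ∧ w (e x) = w x := by
  have card_fiber : ∀ P : V → Prop, Nat.card {x : L // P x} = {y | y ∈ L ∧ P y}.ncard :=
    fun P => by
      rw [← Nat.card_coe_set_eq]
      exact Nat.card_congr (Equiv.subtypeSubtypeEquivSubtypeInter (· ∈ L) P)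
  have fibers : ∀ c : Q × W, Nonempty ({x : L // ((σ (p x), w x) : Q × W) = c} ≃
      {x : L // ((p x, w x) : Q × W) = c}) := by
    rintro ⟨c, d⟩
    rw [← Finite.card_eq, card_fiber (fun y => (σ (p y), w y) = (c, d)),
      card_fiber (fun y => (p y, w y) = (c, d)), eq_comm]
    simpa [fiberCard, ← Equiv.eq_symm_apply] using congrFun (h (σ.symm c)) d
  let e := fun c => (fibers c).some
  exact ⟨Equiv.ofFiberEquiv e, fun x => by simpa using Equiv.ofFiberEquiv_map e x⟩

lemma Iso.fiberCard_apply (w : V → W) (σ : G ≃g G) (hσL : ∀ x, σ x ∈ L ↔ x ∈ L)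
    (hσp : ∀ x ∈ L, p (σ x) = σ (p x)) (hσw : ∀ x, w (σ x) = w x) (q : V) :
    fiberCard L p w (σ q) = fiberCard L p w q := by
  funext d
  rw [fiberCard, fiberCard]
  conv_rhs => rw [← Set.ncard_image_of_injective _ σ.injective]
  congr 1
  ext x
  obtain ⟨y, rfl⟩ := σ.surjective x
  rw [σ.injective.mem_set_image]
  simp only [Set.mem_ofPred_eq, hσL, hσw]
  exact and_congr_right fun hy => by rw [hσp y hy, σ.injective.eq_iff]

theorem exists_iso_extend_of_leaves [Finite V] (hp : ∀ x ∈ L, G.neighborSet x = {p x})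
    (hpL : ∀ x ∈ L, p x ∉ L) (w : V → W) (τ : G.induce Lᶜ ≃g G.induce Lᶜ)
    (hτw : ∀ q, w (τ q) = w q) (hfib : ∀ q : ↥Lᶜ, fiberCard L p w (τ q) = fiberCard L p w q) :
    ∃ φ : G ≃g G, (∀ x, w (φ x) = w x) ∧ ∀ q : ↥Lᶜ, φ q = τ q := by
  classical
  set σ : Equiv.Perm V := Equiv.Perm.ofSubtype τ.toEquiv
  have hσL : ∀ x ∈ L, σ x = x := fun x hx =>
    Equiv.Perm.ofSubtype_apply_of_not_mem _ (not_not.2 hx)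
  have hσ : ∀ q : ↥Lᶜ, σ q = τ q := fun q => Equiv.Perm.ofSubtype_apply_coe _ q
  obtain ⟨e, he⟩ := exists_perm_of_fiberCard_eq L p w σ fun c => by
    by_cases hc : c ∈ L
    · rw [hσL c hc]
    · exact hσ ⟨c, hc⟩ ▸ hfib ⟨c, hc⟩
  set π := σ * Equiv.Perm.ofSubtype e
  have hπL : ∀ x (hx : x ∈ L), π x = e ⟨x, hx⟩ := fun x hx => by
    simp [π, Equiv.Perm.ofSubtype_apply_of_mem e hx, hσL _ (e _).2]
  have hπ : ∀ q : ↥Lᶜ, π q = τ q := fun q => by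
    simp [π, Equiv.Perm.ofSubtype_apply_of_not_mem e q.2, hσ]
  have hπp : ∀ x ∈ L, ∃ z, G.neighborSet x = {z} ∧ G.neighborSet (π x) = {π z} := fun x hx => by
    refine ⟨p x, hp x hx, ?_⟩
    rw [hπL x hx, hp _ (e _).2, (he _).1]
    exact congrArg _ ((hσ ⟨p x, hpL x hx⟩).trans (hπ ⟨p x, hpL x hx⟩).symm)
  have hcore : ∀ x ∉ L, ∀ y ∉ L, G.Adj (π x) (π y) ↔ G.Adj x y := fun x hx y hy => by
    rw [hπ ⟨x, hx⟩, hπ ⟨y, hy⟩]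
    exact τ.map_adj_iff
  refine ⟨⟨π, adj_apply_iff_of_pendant π.injective hπp hcore _ _⟩, fun x => ?_, hπ⟩
  by_cases hx : x ∈ L
  · exact (congrArg w (hπL x hx)).trans (he _).2
  · exact (congrArg w (hπ ⟨x, hx⟩)).trans (hτw _)

lemma exists_iso_swap_of_neighborSet_eq [DecidableEq V] (w : V → W) (φ : G ≃g G)
    (hφw : ∀ x, w (φ x) = w x) {a b : V} (hab : a ≠ b)
    (ha : G.neighborSet (φ a) = G.neighborSet b) (hb : G.neighborSet (φ b) = G.neighborSet a)
    (hw : w a = w b) : ∃ τ : G ≃g G, (∀ x, w (τ x) = w x) ∧ τ a = b ∧ τ b = a := by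
  set τ₁ := φ.trans (Iso.swapOfNeighborSetEq ha)
  have hτ₁a : τ₁ a = b := Equiv.swap_apply_left _ _
  have hτ₁b : G.neighborSet (τ₁ b) = G.neighborSet a := (neighborSet_swap_apply ha _).trans hb
  have hτ₁w : ∀ x, w (τ₁ x) = w x := fun x =>
    (Equiv.apply_swap_eq_self (by rw [hφw, hw]) _).trans (hφw x)
  have hbτ₁b : b ≠ τ₁ b := fun h => hab (τ₁.injective (hτ₁a.trans h))
  refine ⟨τ₁.trans (Iso.swapOfNeighborSetEq hτ₁b), fun x => ?_, ?_, Equiv.swap_apply_left _ _⟩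
  · exact (Equiv.apply_swap_eq_self (by rw [hτ₁w, hw]) _).trans (hτ₁w x)
  · show Equiv.swap (τ₁ b) a (τ₁ a) = b
    rw [hτ₁a, Equiv.swap_apply_of_ne_of_ne hbτ₁b hab.symm]

end Leaves

section Trees

lemma Walk.IsPath.exists_adj_adj_of_mem_support {u v z : V} {p : G.Walk u v} (hp : p.IsPath)
    (hz : z ∈ p.support) (hzu : z ≠ u) (hzv : z ≠ v) :
    ∃ x ∈ p.support, ∃ y ∈ p.support, x ≠ y ∧ G.Adj z x ∧ G.Adj z y := by
  obtain ⟨n, rfl, hn⟩ := Walk.mem_support_iff_exists_getVert.mp hz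
  have hn0 : n ≠ 0 := by
    rintro rfl
    exact hzu p.getVert_zero
  have hnl : n < p.length := lt_of_le_of_ne hn (by rintro rfl; exact hzv p.getVert_length)
  obtain ⟨m, rfl⟩ := Nat.exists_eq_succ_of_ne_zero hn0
  refine ⟨p.getVert m, p.getVert_mem_support m, p.getVert (m + 2), p.getVert_mem_support _,
    fun h => ?_, (p.adj_getVert_succ (by omega)).symm, p.adj_getVert_succ hnl⟩
  have := hp.getVert_injOn (by simp; omega) (by simp; omega) h
  omega

lemma Preconnected.induce_of_forall_neighborSet_diff_subset (hG : G.Preconnected) {s : Set V}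
    (hs : ∀ x ∉ s, ∃ y, G.neighborSet x \ {y} ⊆ sᶜ ∩ G.leaves) : (G.induce s).Preconnected := by
  rintro ⟨a, ha⟩ ⟨b, hb⟩
  obtain ⟨p, hp⟩ := hG.exists_isPath a b
  suffices h : ∀ z ∈ p.support, z ∈ s from ⟨p.induce s h⟩
  have ne_ends : ∀ z ∉ s, z ≠ a ∧ z ≠ b := fun z hz =>
    ⟨fun h => hz (h ▸ ha), fun h => hz (h ▸ hb)⟩
  -- A deleted vertex inside the path has two neighbours on it; one of them is not `y`, hence a
  -- deleted leaf strictly inside the path, which a path cannot contain.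
  intro z hz
  by_contra hzs
  obtain ⟨y, hy⟩ := hs z hzs
  obtain ⟨x₁, hx₁, x₂, hx₂, hne, h₁, h₂⟩ :=
    hp.exists_adj_adj_of_mem_support hz (ne_ends z hzs).1 (ne_ends z hzs).2
  obtain ⟨x, hx, hzx, hxy⟩ : ∃ x ∈ p.support, G.Adj z x ∧ x ≠ y := by
    by_cases h : x₁ = y
    · exact ⟨x₂, hx₂, h₂, h ▸ hne.symm⟩
    · exact ⟨x₁, hx₁, h₁, h⟩
  obtain ⟨hxs, hxleaf⟩ := hy ⟨hzx, hxy⟩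
  exact hp.isTrail.not_mem_support_of_subsingleton_neighborSet (ne_ends x hxs).1
    (ne_ends x hxs).2 hxleaf hx

lemma IsTree.induce_of_forall_neighborSet_diff_subset (hG : G.IsTree) {s : Set V}
    (hne : s.Nonempty) (hs : ∀ x ∉ s, ∃ y, G.neighborSet x \ {y} ⊆ sᶜ ∩ G.leaves) :
    (G.induce s).IsTree :=
  ⟨(connected_iff _).2 ⟨hG.connected.preconnected.induce_of_forall_neighborSet_diff_subset hs,
    hne.to_subtype⟩, hG.isAcyclic.embedding (Embedding.induce s)⟩

lemma Preconnected.mem_of_forall_adj_mem (hG : G.Preconnected) {s : Set V}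
    (hs : ∀ x ∈ s, ∀ y, G.Adj x y → y ∈ s) {x : V} (hx : x ∈ s) (y : V) : y ∈ s := by
  obtain ⟨p⟩ := hG x y
  induction p with
  | nil => exact hx
  | cons h _ ih => exact ih (hs _ hx _ h)

lemma Preconnected.exists_neighborSet_eq_singleton [Nontrivial V] (hG : G.Preconnected) {x : V}
    (hx : x ∈ G.leaves) : ∃ y, G.neighborSet x = {y} := by
  obtain ⟨y, hy⟩ := hG.exists_adj_of_nontrivial x
  exact ⟨y, Set.Subsingleton.eq_singleton_of_mem hx hy⟩

lemma Preconnected.notMem_leaves_of_neighborSet_eq_singleton (hG : G.Preconnected)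
    (hV : 2 < Nat.card V) {x y : V} (hx : G.neighborSet x = {y}) : y ∉ G.leaves := by
  intro hy
  have hyx : G.neighborSet y = {x} := Set.Subsingleton.eq_singleton_of_mem hy
    (G.adj_symm ((adj_iff_eq_of_neighborSet_eq_singleton hx).2 rfl))
  have hclosed : ∀ z ∈ ({x, y} : Set V), ∀ z', G.Adj z z' → z' ∈ ({x, y} : Set V) := by
    rintro z (rfl | rfl) z' hz'
    · exact Or.inr ((adj_iff_eq_of_neighborSet_eq_singleton hx).1 hz')
    · exact Or.inl ((adj_iff_eq_of_neighborSet_eq_singleton hyx).1 hz')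
  have huniv : ({x, y} : Set V) = Set.univ :=
    Set.eq_univ_of_forall (hG.mem_of_forall_adj_mem hclosed (Set.mem_insert x _))
  have := Set.ncard_insert_le x {y}
  rw [huniv, Set.ncard_univ, Set.ncard_singleton] at this
  omega

lemma IsTree.exists_mem_leaves [Finite V] [Nontrivial V] (hG : G.IsTree) : ∃ x, x ∈ G.leaves := by
  classical
  have := Fintype.ofFinite V
  obtain ⟨x, hx⟩ := hG.exists_vert_degree_one_of_nontrivial
  obtain ⟨y, -, hy⟩ := degree_eq_one_iff_existsUnique_adj.mp hx
  exact ⟨x, fun a ha b hb => (hy a ha).trans (hy b hb).symm⟩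

lemma IsTree.exists_parent_of_two_lt_card [Finite V] (hG : G.IsTree) (hV : 2 < Nat.card V) :
    ∃ p : V → V, (∀ x ∈ G.leaves, G.neighborSet x = {p x}) ∧ (∀ x ∈ G.leaves, p x ∉ G.leaves) ∧
      (G.induce G.leavesᶜ).IsTree ∧ Nat.card ↥G.leavesᶜ < Nat.card V := by
  have : Nontrivial V := Finite.one_lt_card_iff_nontrivial.1 (by omega)
  have hleaf : ∀ x ∈ G.leaves, ∃ y, G.neighborSet x = {y} := fun x hx =>
    hG.connected.preconnected.exists_neighborSet_eq_singleton hx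
  choose! p hp using hleaf
  have hpL : ∀ x ∈ G.leaves, p x ∉ G.leaves := fun x hx =>
    hG.connected.preconnected.notMem_leaves_of_neighborSet_eq_singleton hV (hp x hx)
  obtain ⟨x₀, hx₀⟩ := hG.exists_mem_leaves
  refine ⟨p, hp, hpL, hG.induce_of_forall_neighborSet_diff_subset ⟨p x₀, hpL x₀ hx₀⟩
    fun x hx => ⟨p x, by simp [hp x (not_not.1 hx)]⟩, ?_⟩
  rw [Nat.card_coe_set_eq]
  exact Set.ncard_lt_card ((Set.ne_univ_iff_exists_notMem _).2 ⟨x₀, not_not.2 hx₀⟩)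

theorem IsTree.exists_iso_swap [Finite V] (hG : G.IsTree) (w : V → W) (σ : G ≃g G)
    (hσ : ∀ x, w (σ x) = w x) (a : V) :
    ∃ τ : G ≃g G, (∀ x, w (τ x) = w x) ∧ τ a = σ a ∧ τ (σ a) = a := by
  classical
  induction hn : Nat.card V using Nat.strong_induction_on generalizing V W with
  | _ n ih =>
  by_cases hfix : σ a = a
  · exact ⟨Iso.refl, fun _ => rfl, hfix.symm, hfix⟩
  by_cases hsmall : Nat.card V ≤ 2
  · exact ⟨σ, hσ, rfl, apply_apply_eq_self_of_card_le_two hsmall σ.injective hfix⟩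
  obtain ⟨p, hp, hpL, hR, hcard⟩ := hG.exists_parent_of_two_lt_card (by omega)
  have hσL : ∀ x, σ x ∈ G.leaves ↔ x ∈ G.leaves := fun x => σ.apply_mem_leaves_iff
  have hσp : ∀ x ∈ G.leaves, p (σ x) = σ (p x) := fun x hx => Set.singleton_eq_singleton_iff.1 <|
    (hp _ ((hσL x).2 hx)).symm.trans (σ.neighborSet_apply_eq_singleton (hp x hx))
  set σ' := σ.induce (s := G.leavesᶜ) (t := G.leavesᶜ) (σ.toEquiv.bijOn fun x => (hσL x).not)
  set w' : ↥G.leavesᶜ → W × (W → ℕ) := fun q => (w q, fiberCard G.leaves p w q)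
  have hσ' : ∀ q, w' (σ' q) = w' q := fun q =>
    Prod.ext (hσ q) (σ.fiberCard_apply w hσL hσp hσ q)
  have lift : ∀ τ' : G.induce G.leavesᶜ ≃g G.induce G.leavesᶜ, (∀ q, w' (τ' q) = w' q) →
      ∃ φ : G ≃g G, (∀ x, w (φ x) = w x) ∧ ∀ q : ↥G.leavesᶜ, φ q = τ' q := fun τ' h =>
    exists_iso_extend_of_leaves hp hpL w τ' (fun q => congrArg Prod.fst (h q))
      (fun q => congrArg Prod.snd (h q))
  by_cases ha : a ∈ G.leaves
  -- Lift an automorphism exchanging the neighbours of the leaves `a` and `σ a`, then correct it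
  -- by swapping twin leaves.
  · obtain ⟨τ', hτ'w, hτ'1, hτ'2⟩ := ih _ (hn ▸ hcard) hR w' σ' hσ' ⟨p a, hpL a ha⟩ rfl
    obtain ⟨φ, hφw, hφ⟩ := lift τ' hτ'w
    have hσa : σ a ∈ G.leaves := (hσL a).2 ha
    have hpσa : (σ' ⟨p a, hpL a ha⟩ : V) = p (σ a) := (hσp a ha).symm
    refine exists_iso_swap_of_neighborSet_eq w φ hφw (Ne.symm hfix) ?_ ?_ (hσ a).symm
    · rw [φ.neighborSet_apply_eq_singleton (hp a ha), hp _ hσa, ← hpσa, ← hτ'1]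
      exact congrArg _ (hφ ⟨p a, hpL a ha⟩)
    · rw [φ.neighborSet_apply_eq_singleton (hp _ hσa), hp a ha, ← hpσa]
      exact congrArg _ ((hφ _).trans (congrArg Subtype.val hτ'2))
  · obtain ⟨τ', hτ'w, hτ'1, hτ'2⟩ := ih _ (hn ▸ hcard) hR w' σ' hσ' ⟨a, ha⟩ rfl
    obtain ⟨φ, hφw, hφ⟩ := lift τ' hτ'w
    exact ⟨φ, hφw, (hφ _).trans (congrArg Subtype.val hτ'1),
      (hφ (σ' ⟨a, ha⟩)).trans (congrArg Subtype.val hτ'2)⟩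

end Trees

end SimpleGraph

namespace ErnPaper

variable {V W : Type} {T : SimpleGraph V} {u v : V}

section PendantStars

def leavesAt (T : SimpleGraph V) (u : V) : Set V := {x | T.neighborSet x = {u}}

def pendantStar (T : SimpleGraph V) (u : V) : Set V := insert u (leavesAt T u)

@[simp]
lemma mem_leavesAt {x : V} : x ∈ leavesAt T u ↔ T.neighborSet x = {u} := Iff.rfl

@[simp]
lemma mem_pendantStar {x : V} : x ∈ pendantStar T u ↔ x = u ∨ x ∈ leavesAt T u := Iff.rfl

lemma notMem_leavesAt_self (u : V) : u ∉ leavesAt T u := fun h =>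
  T.irrefl ((adj_iff_eq_of_neighborSet_eq_singleton h).2 rfl)

lemma disjoint_leavesAt (huv : u ≠ v) : Disjoint (leavesAt T u) (leavesAt T v) :=
  Set.disjoint_left.2 fun _ hu hv =>
    huv (Set.singleton_eq_singleton_iff.1 ((mem_leavesAt.1 hu).symm.trans hv))

lemma apply_mem_leavesAt_iff {H : SimpleGraph W} (f : T ≃g H) {x : V} :
    f x ∈ leavesAt H (f u) ↔ x ∈ leavesAt T u := by
  refine ⟨fun h => ?_, f.neighborSet_apply_eq_singleton⟩
  simpa using f.symm.neighborSet_apply_eq_singleton h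

lemma mem_leavesAt_induce_iff {s : Set V} (hvs : v ∈ s)
    (hs : ∀ x, T.Adj v x → x ∈ s ∧ T.neighborSet x ⊆ s) (x : s) :
    x ∈ leavesAt (T.induce s) ⟨v, hvs⟩ ↔ (x : V) ∈ leavesAt T v := by
  have hval : Subtype.val '' ({⟨v, hvs⟩} : Set s) = {v} := Set.image_singleton
  constructor
  · intro hx
    have hxv : T.Adj v x := T.adj_symm ((adj_iff_eq_of_neighborSet_eq_singleton hx).2 rfl)
    rw [mem_leavesAt, ← image_val_induce_neighborSet x (hs x hxv).2, mem_leavesAt.1 hx, hval]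
  · intro hx
    have hxv : T.Adj v x := T.adj_symm ((adj_iff_eq_of_neighborSet_eq_singleton hx).2 rfl)
    have h := image_val_induce_neighborSet x (hs x hxv).2
    rw [mem_leavesAt.1 hx, ← hval] at h
    exact Set.image_injective.2 Subtype.val_injective h

lemma forall_adj_mem_compl_pendantStar (huv : u ≠ v) (hnadj : ¬ T.Adj u v)
    (hcommon : ∀ x, T.Adj u x → ¬ T.Adj v x) :
    ∀ x, T.Adj v x → x ∈ (pendantStar T u)ᶜ ∧ T.neighborSet x ⊆ (pendantStar T u)ᶜ := by
  have notA : ∀ {y z}, T.Adj y z → z ≠ u → y ∉ leavesAt T u := fun h hz hy =>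
    hz ((adj_iff_eq_of_neighborSet_eq_singleton hy).1 h)
  intro x hvx
  have hxu : x ≠ u := by
    rintro rfl
    exact hnadj (T.adj_symm hvx)
  refine ⟨by simp [hxu, notA (T.adj_symm hvx) (Ne.symm huv)], fun y hxy => ?_⟩
  have hyu : y ≠ u := by
    rintro rfl
    exact hcommon x (T.adj_symm hxy) hvx
  simp [hyu, notA (T.adj_symm hxy) hxu]

lemma mem_compl_union_iff_apply_mem (huv : u ≠ v) (hnadj : ¬ T.Adj u v)
    (hcommon : ∀ x, T.Adj u x → ¬ T.Adj v x)
    (χ : T.induce (pendantStar T u)ᶜ ≃g T.induce (pendantStar T v)ᶜ)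
    (hvPu : v ∈ (pendantStar T u)ᶜ) (huPv : u ∈ (pendantStar T v)ᶜ)
    (hχ : χ ⟨v, hvPu⟩ = ⟨u, huPv⟩) (x : ↥(pendantStar T u)ᶜ) :
    (x : V) ∈ (pendantStar T u ∪ pendantStar T v)ᶜ ↔
      (χ x : V) ∈ (pendantStar T u ∪ pendantStar T v)ᶜ := by
  have hx : (x : V) ∉ pendantStar T u := x.2
  have hχx : (χ x : V) ∉ pendantStar T v := (χ x).2
  have hxv : (x : V) = v ↔ x = ⟨v, hvPu⟩ := by rw [Subtype.ext_iff]
  have hχxu : (χ x : V) = u ↔ χ x = ⟨u, huPv⟩ := by rw [Subtype.ext_iff]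
  rw [Set.mem_compl_iff, Set.mem_compl_iff, Set.mem_union, Set.mem_union, or_iff_right hx,
    or_iff_left hχx, mem_pendantStar, mem_pendantStar, hxv, hχxu,
    ← mem_leavesAt_induce_iff hvPu (forall_adj_mem_compl_pendantStar huv hnadj hcommon),
    ← mem_leavesAt_induce_iff huPv (forall_adj_mem_compl_pendantStar huv.symm
      (fun h => hnadj h.symm) fun y hvy huy => hcommon y huy hvy),
    ← hχ, χ.injective.eq_iff, apply_mem_leavesAt_iff χ]

end PendantStars

section EndCutvertex

lemma IsEndCutvertex.map {H : SimpleGraph W} (f : T ≃g H) {x : V} (hx : IsEndCutvertex T x) :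
    IsEndCutvertex H (f x) := by
  refine ⟨(f.ncard_neighborSet x).symm ▸ hx.1, ?_⟩
  have himage : {w | w ∈ H.neighborSet (f x) ∧ 2 ≤ (H.neighborSet w).ncard} =
      f '' {w | w ∈ T.neighborSet x ∧ 2 ≤ (T.neighborSet w).ncard} := by
    ext y
    obtain ⟨y, rfl⟩ := f.surjective y
    simp [f.injective.mem_set_image, f.ncard_neighborSet, f.map_adj_iff]
  rw [himage, Set.ncard_image_of_injective _ f.injective, hx.2]

lemma IsEndCutvertex.induce (hv : IsEndCutvertex T v) {s : Set V} (hvs : v ∈ s)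
    (hs : ∀ x, T.Adj v x → x ∈ s ∧ T.neighborSet x ⊆ s) :
    IsEndCutvertex (T.induce s) ⟨v, hvs⟩ := by
  have ncard_eq : ∀ x : s, T.neighborSet x ⊆ s →
      ((T.induce s).neighborSet x).ncard = (T.neighborSet x).ncard := fun x hx => by
    rw [← Set.ncard_image_of_injective _ Subtype.val_injective, image_val_induce_neighborSet x hx]
  refine ⟨(ncard_eq ⟨v, hvs⟩ fun x hx => (hs x hx).1) ▸ hv.1, ?_⟩
  rw [← Set.ncard_image_of_injective _ Subtype.val_injective, ← hv.2]
  congr 1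
  ext x
  constructor
  · rintro ⟨y, ⟨hy, hdeg⟩, rfl⟩
    exact ⟨hy, ncard_eq y (hs y hy).2 ▸ hdeg⟩
  · rintro ⟨hx, hdeg⟩
    exact ⟨⟨x, (hs x hx).1⟩, ⟨hx, (ncard_eq ⟨x, _⟩ (hs x hx).2).symm ▸ hdeg⟩, rfl⟩

lemma IsEndCutvertex.notMem_leavesAt (hu : IsEndCutvertex T u) (x : V) : u ∉ leavesAt T x :=
  fun h => by
    have := hu.1
    rw [mem_leavesAt.1 h, Set.ncard_singleton] at this
    omega

lemma IsEndCutvertex.exists_neighborSet_eq_insert [Finite V] (hu : IsEndCutvertex T u) :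
    ∃ u', T.neighborSet u = insert u' (leavesAt T u) ∧ 2 ≤ (T.neighborSet u').ncard := by
  obtain ⟨u', hu'⟩ := Set.ncard_eq_one.1 hu.2
  have hmem : ∀ w, T.Adj u w → 2 ≤ (T.neighborSet w).ncard → w = u' := fun w h1 h2 =>
    hu'.subset ⟨h1, h2⟩
  obtain ⟨hadj, hdeg⟩ : T.Adj u u' ∧ 2 ≤ (T.neighborSet u').ncard := hu'.symm.subset rfl
  refine ⟨u', Set.ext fun x => ⟨fun hx => ?_, ?_⟩, hdeg⟩
  · by_cases hxu' : x = u'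
    · exact Or.inl hxu'
    · have hux : u ∈ T.neighborSet x := T.adj_symm hx
      have hpos := (Set.ncard_pos (Set.toFinite _)).2 ⟨u, hux⟩
      have hle : (T.neighborSet x).ncard ≤ 1 := by
        by_contra h
        exact hxu' (hmem x hx (by omega))
      obtain ⟨z, hz⟩ := Set.ncard_eq_one.1 (show (T.neighborSet x).ncard = 1 by omega)
      rw [hz, Set.mem_singleton_iff] at hux
      exact Or.inr (hux ▸ hz)
  · rintro (rfl | hx)
    · exact hadj
    · exact T.adj_symm ((adj_iff_eq_of_neighborSet_eq_singleton hx).2 rfl)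

lemma IsEndCutvertex.exists_neighborSet_diff_subset [Finite V] (hu : IsEndCutvertex T u)
    {s : Set V} (hs : s ⊆ (pendantStar T u)ᶜ) {x : V} (hx : x ∈ pendantStar T u) :
    ∃ y, T.neighborSet x \ {y} ⊆ sᶜ ∩ T.leaves := by
  have leaf : ∀ z ∈ leavesAt T u, z ∈ sᶜ ∩ T.leaves := fun z hz =>
    ⟨fun h => hs h (Or.inr hz),
      mem_leaves.2 ((mem_leavesAt.1 hz).symm ▸ Set.subsingleton_singleton)⟩
  rcases hx with rfl | hx
  · obtain ⟨u', hNu, -⟩ := hu.exists_neighborSet_eq_insert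
    refine ⟨u', fun z hz => leaf z ?_⟩
    rw [hNu] at hz
    exact hz.1.resolve_left hz.2
  · refine ⟨u, fun z hz => absurd ?_ hz.2⟩
    rw [← mem_leavesAt.1 hx]
    exact hz.1

lemma isTree_induce_compl_pendantStar_union [Finite V] (hT : T.IsTree) (hu : IsEndCutvertex T u)
    (hv : IsEndCutvertex T v) (hne : (pendantStar T u ∪ pendantStar T v)ᶜ.Nonempty) :
    (T.induce (pendantStar T u ∪ pendantStar T v)ᶜ).IsTree :=
  hT.induce_of_forall_neighborSet_diff_subset hne fun x hx => by
    rcases not_not.1 hx with h | h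
    · exact hu.exists_neighborSet_diff_subset (Set.compl_subset_compl.2 Set.subset_union_left) h
    · exact hv.exists_neighborSet_diff_subset (Set.compl_subset_compl.2 Set.subset_union_right) h

end EndCutvertex

section DeletedVertex

lemma mem_leavesAt_iff_forall_not_adj [Nontrivial V] (hT : T.Preconnected)
    (x : ↥({u}ᶜ : Set V)) : (x : V) ∈ leavesAt T u ↔ ∀ y, ¬ (T.induce {u}ᶜ).Adj x y := by
  refine ⟨fun hx y hxy => y.2 ((adj_iff_eq_of_neighborSet_eq_singleton hx).1 hxy), fun h => ?_⟩
  obtain ⟨y, hy⟩ := hT.exists_adj_of_nontrivial (x : V)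
  refine (Set.Nonempty.subset_singleton_iff ⟨y, hy⟩).1 fun z hz => ?_
  by_contra hzu
  exact h ⟨z, hzu⟩ hz

lemma mem_leavesAt_apply_iff [Nontrivial V] (hT : T.Preconnected)
    (f : T.induce {u}ᶜ ≃g T.induce {v}ᶜ) (x : ↥({u}ᶜ : Set V)) :
    (f x : V) ∈ leavesAt T v ↔ (x : V) ∈ leavesAt T u := by
  rw [mem_leavesAt_iff_forall_not_adj hT, mem_leavesAt_iff_forall_not_adj hT]
  refine ⟨fun h y hy => h (f y) (f.map_adj_iff.2 hy), fun h y hy => h (f.symm y) ?_⟩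
  simpa using f.symm.map_adj_iff.2 hy

lemma compl_pendantStar_subset (T : SimpleGraph V) (u : V) : (pendantStar T u)ᶜ ⊆ {u}ᶜ :=
  Set.compl_subset_compl.2 (Set.singleton_subset_iff.2 (Set.mem_insert _ _))

noncomputable def isoInduceComplPendantStar [Nontrivial V] (hT : T.Preconnected)
    (f : T.induce {u}ᶜ ≃g T.induce {v}ᶜ) :
    T.induce (pendantStar T u)ᶜ ≃g T.induce (pendantStar T v)ᶜ :=
  f.induceRestrict (compl_pendantStar_subset T u) (compl_pendantStar_subset T v) fun x => by
    have hx : (x : V) ≠ u := x.2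
    have hfx : (f x : V) ≠ v := (f x).2
    simp [mem_leavesAt_apply_iff hT f x, hx, hfx]

lemma ncard_leavesAt_eq [Nontrivial V] (hT : T.Preconnected)
    (f : T.induce {u}ᶜ ≃g T.induce {v}ᶜ) : (leavesAt T u).ncard = (leavesAt T v).ncard := by
  have hrange : ∀ w, leavesAt T w ⊆ Set.range (Subtype.val : ↥({w}ᶜ : Set V) → V) :=
    fun w x hx => ⟨⟨x, fun h => notMem_leavesAt_self w (h ▸ hx)⟩, rfl⟩
  rw [← Set.ncard_preimage_of_injective_subset_range Subtype.val_injective (hrange u),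
    ← Set.ncard_preimage_of_injective_subset_range Subtype.val_injective (hrange v),
    ← Set.ncard_image_of_injective _ f.injective]
  congr 1
  ext y
  obtain ⟨x, rfl⟩ := f.surjective y
  simp [f.injective.mem_set_image, mem_leavesAt_apply_iff hT f x]

end DeletedVertex

variable [Finite V]

section StarSwap

lemma exists_perm_swap_pendantStars (huv : u ≠ v) (hu : u ∉ leavesAt T v)
    (hv : v ∉ leavesAt T u) (hAB : (leavesAt T u).ncard = (leavesAt T v).ncard)
    (τ : Equiv.Perm ↥(pendantStar T u ∪ pendantStar T v)ᶜ) :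
    ∃ π : Equiv.Perm V, π u = v ∧ π v = u ∧ (∀ x ∈ leavesAt T u, π x ∈ leavesAt T v) ∧
      (∀ x ∈ leavesAt T v, π x ∈ leavesAt T u) ∧
      ∀ q : ↥(pendantStar T u ∪ pendantStar T v)ᶜ, π q = τ q := by
  classical
  obtain ⟨e⟩ : Nonempty (leavesAt T u ≃ leavesAt T v) :=
    Finite.card_eq.1 (by rwa [Nat.card_coe_set_eq, Nat.card_coe_set_eq])
  obtain ⟨σ, hσA, hσB, hσ⟩ := exists_perm_swap_of_disjoint (disjoint_leavesAt huv) e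
  have huL : u ∉ leavesAt T u ∪ leavesAt T v := by
    rintro (h | h)
    exacts [notMem_leavesAt_self u h, hu h]
  have hvL : v ∉ leavesAt T u ∪ leavesAt T v := by
    rintro (h | h)
    exacts [hv h, notMem_leavesAt_self v h]
  have hswap : ∀ x ∈ leavesAt T u ∪ leavesAt T v, Equiv.swap u v x = x := fun x hx =>
    Equiv.swap_apply_of_ne_of_ne (ne_of_mem_of_not_mem hx huL) (ne_of_mem_of_not_mem hx hvL)
  obtain ⟨π, hπS, hπ⟩ := exists_perm_piecewise τ (Equiv.swap u v * σ) fun q => by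
    have hq := q.2
    simp only [Set.mem_compl_iff, Set.mem_union, mem_pendantStar, not_or] at hq
    rw [Equiv.Perm.mul_apply, hσ q (by rintro (h | h); exacts [hq.1.2 h, hq.2.2 h]),
      Equiv.swap_apply_of_ne_of_ne hq.1.1 hq.2.1]
  refine ⟨π, ?_, ?_, fun x hx => ?_, fun x hx => ?_, hπS⟩
  · rw [hπ u (by simp), Equiv.Perm.mul_apply, hσ u huL, Equiv.swap_apply_left]
  · rw [hπ v (by simp), Equiv.Perm.mul_apply, hσ v hvL, Equiv.swap_apply_right]
  · rw [hπ x (by simp [hx]), Equiv.Perm.mul_apply, hswap _ (Or.inr (hσA x hx))]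
    exact hσA x hx
  · rw [hπ x (by simp [hx]), Equiv.Perm.mul_apply, hswap _ (Or.inl (hσB x hx))]
    exact hσB x hx

lemma exists_iso_apply_eq_of_iso_induce_compl_union (huv : u ≠ v) (hu : u ∉ leavesAt T v)
    (hv : v ∉ leavesAt T u) (hAB : (leavesAt T u).ncard = (leavesAt T v).ncard)
    (h : ∃ τ : T.induce (pendantStar T u ∪ pendantStar T v)ᶜ ≃g
      T.induce (pendantStar T u ∪ pendantStar T v)ᶜ, ∀ q : ↥(pendantStar T u ∪ pendantStar T v)ᶜ,
        (T.Adj q u ↔ T.Adj (τ q) v) ∧ (T.Adj q v ↔ T.Adj (τ q) u)) :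
    ∃ φ : T ≃g T, φ u = v := by
  obtain ⟨τ, hτ⟩ := h
  obtain ⟨φ, hφu, hφv, hφA, hφB, hφS⟩ := exists_perm_swap_pendantStars huv hu hv hAB τ.toEquiv
  have pendant : ∀ x ∈ leavesAt T u ∪ leavesAt T v,
      ∃ z, T.neighborSet x = {z} ∧ T.neighborSet (φ x) = {φ z} := by
    rintro x (hx | hx)
    · exact ⟨u, hx, hφu ▸ hφA x hx⟩
    · exact ⟨v, hx, hφv ▸ hφB x hx⟩
  have core : ∀ x ∉ leavesAt T u ∪ leavesAt T v,
      x ∈ (pendantStar T u ∪ pendantStar T v)ᶜ ∨ u = x ∨ v = x := by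
    intro x hx
    simp only [Set.mem_union, not_or] at hx
    simp only [Set.mem_compl_iff, Set.mem_union, mem_pendantStar]
    tauto
  refine ⟨⟨φ, adj_apply_iff_of_pendant φ.injective pendant (fun x hx y hy => ?_) _ _⟩, hφu⟩
  rcases core x hx with hxS | rfl | rfl <;> rcases core y hy with hyS | rfl | rfl
  · rw [hφS ⟨x, hxS⟩, hφS ⟨y, hyS⟩]
    exact τ.map_adj_iff
  · rw [hφS ⟨x, hxS⟩, hφu]
    exact (hτ ⟨x, hxS⟩).1.symm
  · rw [hφS ⟨x, hxS⟩, hφv]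
    exact (hτ ⟨x, hxS⟩).2.symm
  · rw [hφu, hφS ⟨y, hyS⟩, T.adj_comm, T.adj_comm u]
    exact (hτ ⟨y, hyS⟩).1.symm
  · simp
  · rw [hφu, hφv, T.adj_comm]
  · rw [hφv, hφS ⟨y, hyS⟩, T.adj_comm, T.adj_comm v]
    exact (hτ ⟨y, hyS⟩).2.symm
  · rw [hφv, hφu, T.adj_comm]
  · simp

lemma nonempty_iso_induce_compl_singleton (huv : u ≠ v) (hu : u ∉ leavesAt T v)
    (hv : v ∉ leavesAt T u) (hAB : (leavesAt T u).ncard = (leavesAt T v).ncard)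
    (χ : T.induce (pendantStar T u)ᶜ ≃g T.induce (pendantStar T v)ᶜ)
    (hvPu : v ∈ (pendantStar T u)ᶜ) (huPv : u ∈ (pendantStar T v)ᶜ) :
    Nonempty ((T.induce (pendantStar T v)ᶜ).induce {χ ⟨v, hvPu⟩}ᶜ ≃g
      (T.induce (pendantStar T v)ᶜ).induce {⟨u, huPv⟩}ᶜ) := by
  obtain ⟨π, hπu, hπv, hπA, hπB, hπ1⟩ := exists_perm_swap_pendantStars huv hu hv hAB 1
  have hπS : ∀ x ∉ pendantStar T u ∪ pendantStar T v, π x = x := fun x hx => hπ1 ⟨x, hx⟩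
  have hmem : ∀ x, π x ∈ (pendantStar T v)ᶜ \ {u} ↔ x ∈ (pendantStar T u)ᶜ \ {v} := by
    intro x
    by_cases hxA : x ∈ leavesAt T u
    · simp [hxA, hπA x hxA]
    by_cases hxB : x ∈ leavesAt T v
    · have hπx := hπB x hxB
      have : π x ≠ u := fun h => notMem_leavesAt_self u (h ▸ hπx)
      have : π x ≠ v := fun h => hv (h ▸ hπx)
      have : x ≠ u := fun h => hu (h ▸ hxB)
      have : x ≠ v := fun h => notMem_leavesAt_self v (h ▸ hxB)
      simp_all [Set.disjoint_left.1 (disjoint_leavesAt huv) hπx]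
    by_cases hxu : x = u
    · simp [hxu, hπu]
    by_cases hxv : x = v
    · simp [hxv, hπv]
    rw [hπS x (by simp_all)]
    simp_all
  have J : T.induce ((pendantStar T u)ᶜ \ {v}) ≃g T.induce ((pendantStar T v)ᶜ \ {u}) :=
    induceIsoOfEquiv π hmem fun x hx y hy => by
      by_cases hxB : x ∈ leavesAt T v
      · exact adj_apply_iff_of_neighborSet_eq_singleton π.injective hxB (hπv ▸ hπB x hxB) y
      by_cases hyB : y ∈ leavesAt T v
      · rw [T.adj_comm, T.adj_comm x]
        exact adj_apply_iff_of_neighborSet_eq_singleton π.injective hyB (hπv ▸ hπB y hyB) x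
      rw [hπS x (by simp_all), hπS y (by simp_all)]
  -- `T[Pv] - χ v ≅ T[Pu] - v = T[Pu \ {v}] ≅ T[Pv \ {u}] = T[Pv] - u`, where `Pu`, `Pv` are the
  -- complements of the pendant stars and the middle step exchanges their leaves.
  exact ⟨((χ.induce (s := {⟨v, hvPu⟩}ᶜ) (t := {χ ⟨v, hvPu⟩}ᶜ)
    (χ.toEquiv.bijOn fun x => by simp)).symm.trans (induceInduceIso T (by simp))).trans
    (J.trans (induceInduceIso T (by simp)).symm)⟩

end StarSwap

section Separated

lemma not_adj_and_forall_not_adj_of_adj (hu : IsEndCutvertex T u) (hv : IsEndCutvertex T v)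
    (huv : u ≠ v) {q : V} (hqA : q ∉ leavesAt T u) (hqv : q ≠ v) (hqu : T.Adj q u)
    (hqnv : ¬ T.Adj q v) : ¬ T.Adj u v ∧ ∀ x, T.Adj u x → ¬ T.Adj v x := by
  obtain ⟨u', hNu, -⟩ := hu.exists_neighborSet_eq_insert
  have hmem : ∀ x, T.Adj u x → x ∈ leavesAt T u ∨ x = q := fun x hx => by
    have hq : q ∈ T.neighborSet u := T.adj_symm hqu
    have hx : x ∈ T.neighborSet u := hx
    rw [hNu] at hq hx
    rcases hx with rfl | h
    exacts [Or.inr (hq.resolve_right hqA).symm, Or.inl h]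
  refine ⟨fun huv' => ?_, fun x hux hvx => ?_⟩
  · rcases hmem v huv' with h | rfl
    exacts [hv.notMem_leavesAt u h, hqv rfl]
  · rcases hmem x hux with h | rfl
    · exact huv ((adj_iff_eq_of_neighborSet_eq_singleton h).1 (T.adj_symm hvx)).symm
    · exact hqnv (T.adj_symm hvx)

lemma not_adj_and_forall_not_adj_of_not_forall (hu : IsEndCutvertex T u)
    (hv : IsEndCutvertex T v) (huv : u ≠ v)
    (h : ¬ ∀ q : ↥(pendantStar T u ∪ pendantStar T v)ᶜ, T.Adj q u ↔ T.Adj q v) :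
    ¬ T.Adj u v ∧ ∀ x, T.Adj u x → ¬ T.Adj v x := by
  obtain ⟨⟨q, hq⟩, hquv⟩ := not_forall.1 h
  simp only [Set.mem_compl_iff, Set.mem_union, mem_pendantStar, not_or] at hq
  by_cases hqu : T.Adj q u
  · exact not_adj_and_forall_not_adj_of_adj hu hv huv hq.1.2 hq.2.1 hqu
      fun hqv => hquv (iff_of_true hqu hqv)
  · obtain ⟨h1, h2⟩ := not_adj_and_forall_not_adj_of_adj hv hu (Ne.symm huv) hq.2.2 hq.1.1
      (by_contra fun hqv => hquv (iff_of_false hqu hqv)) hqu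
    exact ⟨fun h => h1 h.symm, fun x hux hvx => h2 x hvx hux⟩

lemma IsEndCutvertex.exists_mem_forall_adj_iff (hu : IsEndCutvertex T u)
    (hnadj : ¬ T.Adj u v) (hcommon : ∀ x, T.Adj u x → ¬ T.Adj v x) :
    ∃ u' ∈ (pendantStar T u ∪ pendantStar T v)ᶜ,
      ∀ q ∈ (pendantStar T u ∪ pendantStar T v)ᶜ, T.Adj q u ↔ q = u' := by
  obtain ⟨u', hNu, hdu'⟩ := hu.exists_neighborSet_eq_insert
  have hN : ∀ x, T.Adj u x ↔ x = u' ∨ x ∈ leavesAt T u := fun x => by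
    rw [← mem_neighborSet, hNu, Set.mem_insert_iff]
  have huu' : T.Adj u u' := (hN u').2 (Or.inl rfl)
  have hu'A : u' ∉ leavesAt T u := fun h => by
    rw [mem_leavesAt.1 h, Set.ncard_singleton] at hdu'
    omega
  have hu'B : u' ∉ leavesAt T v := fun h =>
    hcommon u' huu' (T.adj_symm ((adj_iff_eq_of_neighborSet_eq_singleton h).2 rfl))
  refine ⟨u', ?_, fun q hq => ?_⟩
  · simp only [Set.mem_compl_iff, Set.mem_union, mem_pendantStar, not_or]
    exact ⟨⟨T.ne_of_adj huu'.symm, hu'A⟩, fun h => hnadj (h ▸ huu'), hu'B⟩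
  · simp only [Set.mem_compl_iff, Set.mem_union, mem_pendantStar, not_or] at hq
    rw [T.adj_comm, hN, or_iff_left hq.1.2]

lemma exists_iso_induce_compl_union (hT : T.IsTree) (hu : IsEndCutvertex T u)
    (hv : IsEndCutvertex T v) (huv : u ≠ v) (hnadj : ¬ T.Adj u v)
    (hcommon : ∀ x, T.Adj u x → ¬ T.Adj v x)
    (χ : T.induce (pendantStar T u)ᶜ ≃g T.induce (pendantStar T v)ᶜ)
    (hvPu : v ∈ (pendantStar T u)ᶜ) (huPv : u ∈ (pendantStar T v)ᶜ)
    (hχ : χ ⟨v, hvPu⟩ = ⟨u, huPv⟩) :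
    ∃ τ : T.induce (pendantStar T u ∪ pendantStar T v)ᶜ ≃g
      T.induce (pendantStar T u ∪ pendantStar T v)ᶜ,
      ∀ q : ↥(pendantStar T u ∪ pendantStar T v)ᶜ,
        (T.Adj q u ↔ T.Adj (τ q) v) ∧ (T.Adj q v ↔ T.Adj (τ q) u) := by
  set σ := χ.induceRestrict (Set.compl_subset_compl.2 Set.subset_union_left)
    (Set.compl_subset_compl.2 Set.subset_union_right)
    (mem_compl_union_iff_apply_mem huv hnadj hcommon χ hvPu huPv hχ)
  have hσ : ∀ q : ↥(pendantStar T u ∪ pendantStar T v)ᶜ, T.Adj q v ↔ T.Adj (σ q) u := fun q => by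
    have h := χ.map_adj_iff (v := ⟨q, Set.compl_subset_compl.2 Set.subset_union_left q.2⟩)
      (w := ⟨v, hvPu⟩)
    rw [hχ] at h
    exact h.symm
  obtain ⟨u', hu', hadju⟩ := hu.exists_mem_forall_adj_iff hnadj hcommon
  obtain ⟨v', hv', hadjv⟩ :=
    hv.exists_mem_forall_adj_iff (fun h => hnadj h.symm) fun x hvx hux => hcommon x hux hvx
  rw [Set.union_comm] at hv' hadjv
  have hσv' : σ ⟨v', hv'⟩ = ⟨u', hu'⟩ :=
    Subtype.ext ((hadju _ (σ _).2).1 ((hσ _).1 ((hadjv v' hv').2 rfl)))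
  obtain ⟨τ, -, hτv', hτu'⟩ :=
    (isTree_induce_compl_pendantStar_union hT hu hv ⟨u', hu'⟩).exists_iso_swap
      (fun _ => ()) σ (fun _ => rfl) ⟨v', hv'⟩
  rw [hσv'] at hτv' hτu'
  have swap_iff : ∀ {a b : ↥(pendantStar T u ∪ pendantStar T v)ᶜ}, τ a = b →
      ∀ x : ↥(pendantStar T u ∪ pendantStar T v)ᶜ, (x : V) = a ↔ (τ x : V) = b :=
    fun hab x => by rw [← hab, ← Subtype.ext_iff, ← Subtype.ext_iff, τ.injective.eq_iff]
  refine ⟨τ, fun q => ⟨?_, ?_⟩⟩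
  · rw [hadju q q.2, hadjv _ (τ q).2]
    exact swap_iff hτu' q
  · rw [hadjv q q.2, hadju _ (τ q).2]
    exact swap_iff hτv' q

lemma isTree_induce_compl_pendantStar (hT : T.IsTree) (hv : IsEndCutvertex T v)
    (hne : (pendantStar T v)ᶜ.Nonempty) : (T.induce (pendantStar T v)ᶜ).IsTree := by
  have h := isTree_induce_compl_pendantStar_union hT hv hv ((Set.union_self _).symm ▸ hne)
  rwa [Set.union_self] at h

lemma card_compl_pendantStar_lt (v : V) : Nat.card ↥(pendantStar T v)ᶜ < Nat.card V := by
  rw [Nat.card_coe_set_eq]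
  exact Set.ncard_lt_card ((Set.ne_univ_iff_exists_notMem _).2 ⟨v, by simp⟩)

end Separated

theorem exists_iso_apply_eq_of_isEndCutvertex (hT : T.IsTree) (hu : IsEndCutvertex T u)
    (hv : IsEndCutvertex T v) (h : Nonempty (T.induce ({u}ᶜ : Set V) ≃g T.induce {v}ᶜ)) :
    ∃ φ : T ≃g T, φ u = v := by
  induction hn : Nat.card V using Nat.strong_induction_on generalizing V with
  | _ n ih =>
  by_cases huv : u = v
  · exact ⟨Iso.refl, huv⟩
  have : Nontrivial V := ⟨⟨u, v, huv⟩⟩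
  have hpre := hT.connected.preconnected
  obtain ⟨f⟩ := h
  have hAB := ncard_leavesAt_eq hpre f
  have huB := hu.notMem_leavesAt v
  have hvA := hv.notMem_leavesAt u
  refine exists_iso_apply_eq_of_iso_induce_compl_union huv huB hvA hAB ?_
  by_cases hsame : ∀ q : ↥(pendantStar T u ∪ pendantStar T v)ᶜ, T.Adj q u ↔ T.Adj q v
  · exact ⟨Iso.refl, fun q => ⟨hsame q, (hsame q).symm⟩⟩
  obtain ⟨hnadj, hcommon⟩ := not_adj_and_forall_not_adj_of_not_forall hu hv huv hsame
  have hvPu : v ∈ (pendantStar T u)ᶜ := by simp [Ne.symm huv, hvA]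
  have huPv : u ∈ (pendantStar T v)ᶜ := by simp [huv, huB]
  set χ₀ := isoInduceComplPendantStar hpre f
  obtain ⟨ρ, hρ⟩ := ih _ (hn ▸ card_compl_pendantStar_lt v)
    (isTree_induce_compl_pendantStar hT hv ⟨u, huPv⟩)
    ((hv.induce hvPu (forall_adj_mem_compl_pendantStar huv hnadj hcommon)).map χ₀)
    (hu.induce huPv (forall_adj_mem_compl_pendantStar (Ne.symm huv) (fun h => hnadj h.symm)
      fun x hvx hux => hcommon x hux hvx))
    (nonempty_iso_induce_compl_singleton huv huB hvA hAB χ₀ hvPu huPv) rfl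
  exact exists_iso_induce_compl_union hT hu hv huv hnadj hcommon (χ₀.trans ρ) hvPu huPv hρ

/-- Removal-similar end-cutvertices of a finite tree are similar: if `u`, `v` are
end-cutvertices with `T - u ≅ T - v`, then some automorphism of `T` maps `u` to `v`. -/
theorem stmt3 {V : Type} [Fintype V] (T : SimpleGraph V) (hT : T.IsTree) (u v : V)
    (hu : IsEndCutvertex T u) (hv : IsEndCutvertex T v)
    (h : Nonempty (T.induce ({u}ᶜ : Set V) ≃g T.induce ({v}ᶜ : Set V))) :
    ∃ φ : T ≃g T, φ u = v :=
  exists_iso_apply_eq_of_isEndCutvertex hT hu hv h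

end ErnPaper
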